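/- arXiv:0812.2240 — 5 statements merged into one kernel-verified Lean document; each statement's English description precedes it below -/
import Mathlib

section
/- For every positive integer n, the quantity (1/(2n)) * Σ_{d | n} φ(n/d) * C(2d, d) is a positive integer, where φ is Euler's totient function and C(2d,d) is the central binomial coefficient. -/
/-!
Rotation acts on the `n`-element subsets of `ZMod (2 * n)`; by Burnside's lemma `2 * n` times the
number of orbits is the total number of fixed points. A subset fixed by an element `g` of order
`m` is a union of cosets of the subgroup `⟨g⟩`, so there are `C(2n/m, n/m)` of them when `m ∣ n`
(and none otherwise), and exactly `φ m` elements have order `m`. Writing `m = n / d` turns the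
fixed-point count into `∑_{d ∣ n} φ(n/d) C(2d, d)`, and the orbit count is positive.
-/

open Finset Nat Pointwise

namespace QuotientAddGroup

variable {G : Type*} [AddCommGroup G] [Fintype G] (H : AddSubgroup G)

open scoped Classical in
noncomputable def preimageFinset (t : Finset (G ⧸ H)) : Finset G := {x | (x : G ⧸ H) ∈ t}

variable {H}

@[simp]
lemma mem_preimageFinset {t : Finset (G ⧸ H)} {x : G} :
    x ∈ preimageFinset H t ↔ (x : G ⧸ H) ∈ t := by
  simp [preimageFinset]

lemma card_preimageFinset (t : Finset (G ⧸ H)) :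
    #(preimageFinset H t) = Nat.card H * #t := by
  have hcoe : (preimageFinset H t : Set G) = QuotientAddGroup.mk ⁻¹' (t : Set (G ⧸ H)) := by
    ext; simp
  rw [← Set.ncard_coe_finset, hcoe, ← Nat.card_coe_set_eq,
    Nat.card_congr (preimageMkEquivAddSubgroupProdSet H _), Nat.card_prod, Nat.card_coe_set_eq,
    Set.ncard_coe_finset]

lemma preimageFinset_injective : Function.Injective (preimageFinset (G := G) H) := by
  intro t u htu
  ext q
  obtain ⟨x, rfl⟩ := QuotientAddGroup.mk_surjective q
  simpa using congrArg (x ∈ ·) htu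

variable [DecidableEq G]

lemma le_stabilizer_iff_mem_range_preimageFinset {s : Finset G} :
    H ≤ AddAction.stabilizer G s ↔ s ∈ Set.range (preimageFinset H) := by
  classical
  constructor
  · intro hH
    refine ⟨s.image (↑), ?_⟩
    ext x
    simp only [mem_preimageFinset, mem_image, QuotientAddGroup.eq]
    refine ⟨fun ⟨y, hy, hyx⟩ => ?_, fun hx => ⟨x, hx, by simp⟩⟩
    have := vadd_mem_vadd_finset (a := -y + x) hy
    rwa [AddAction.mem_stabilizer_iff.mp (hH hyx), vadd_eq_add, add_comm,
      add_neg_cancel_left] at this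
  · rintro ⟨t, rfl⟩ h hh
    rw [AddAction.mem_stabilizer_iff]
    ext x
    rw [mem_vadd_finset]
    constructor
    · rintro ⟨y, hy, rfl⟩
      rwa [mem_preimageFinset, vadd_eq_add, add_comm, mk_add_of_mem _ hh, ← mem_preimageFinset]
    · intro hx
      refine ⟨-h + x, ?_, by simp⟩
      rwa [mem_preimageFinset, add_comm, mk_add_of_mem _ (neg_mem hh), ← mem_preimageFinset]

end QuotientAddGroup

lemma Fintype.card_finset_mul_card_eq {α : Type*} [Fintype α] {m : ℕ} (hm : 0 < m) (k : ℕ) :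
    Nat.card {t : Finset α // m * #t = k} =
      if m ∣ k then (Fintype.card α).choose (k / m) else 0 := by
  split_ifs with hmk
  · obtain ⟨j, rfl⟩ := hmk
    simp_rw [Nat.mul_left_cancel_iff hm, Nat.mul_div_cancel_left j hm]
    rw [Nat.card_eq_fintype_card, Fintype.card_finset_len]
  · rw [Nat.card_eq_zero]
    exact Or.inl ⟨fun ⟨t, ht⟩ => hmk ⟨#t, ht.symm⟩⟩

namespace Set.powersetCard

variable {G : Type*} [AddCommGroup G] [DecidableEq G] {k : ℕ}

lemma mem_fixedBy_iff_zmultiples_le {g : G} {s : Set.powersetCard G k} :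
    s ∈ AddAction.fixedBy (Set.powersetCard G k) g ↔
      AddSubgroup.zmultiples g ≤ AddAction.stabilizer G (s : Finset G) := by
  rw [AddAction.mem_fixedBy, AddSubgroup.zmultiples_le, AddAction.mem_stabilizer_iff,
    ← Subtype.coe_inj, coe_vadd]

open QuotientAddGroup in
lemma card_fixedBy [Fintype G] (g : G) :
    Nat.card (AddAction.fixedBy (Set.powersetCard G k) g) =
      if addOrderOf g ∣ k then (Nat.card G / addOrderOf g).choose (k / addOrderOf g) else 0 := by
  set H := AddSubgroup.zmultiples g
  have hord : 0 < addOrderOf g := addOrderOf_pos g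
  have hquot : Nat.card (G ⧸ H) = Nat.card G / addOrderOf g := by
    rw [H.card_eq_card_quotient_mul_card_addSubgroup, Nat.card_zmultiples,
      Nat.mul_div_cancel _ hord]
  let f : {t : Finset (G ⧸ H) // Nat.card H * #t = k} →
      AddAction.fixedBy (Set.powersetCard G k) g :=
    fun t => ⟨⟨preimageFinset H t, mem_iff.mpr ((card_preimageFinset _).trans t.2)⟩,
      mem_fixedBy_iff_zmultiples_le.mpr
        (le_stabilizer_iff_mem_range_preimageFinset.mpr ⟨t, rfl⟩)⟩
  have hf : Function.Bijective f := by
    refine ⟨fun t u htu => Subtype.ext (preimageFinset_injective ?_), fun s => ?_⟩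
    · exact congrArg (fun s : AddAction.fixedBy _ g => ((s : Set.powersetCard G k) : Finset G)) htu
    · obtain ⟨t, ht⟩ := le_stabilizer_iff_mem_range_preimageFinset.mp
        (mem_fixedBy_iff_zmultiples_le.mp s.2)
      refine ⟨⟨t, ?_⟩, ?_⟩
      · rw [← card_preimageFinset, ht]
        exact mem_iff.mp s.1.2
      · exact Subtype.ext (Subtype.ext ht)
  rw [← Nat.card_eq_of_bijective f hf,
    Fintype.card_finset_mul_card_eq (by rwa [Nat.card_zmultiples]), Nat.card_zmultiples,
    ← Nat.card_eq_fintype_card, hquot]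

end Set.powersetCard

lemma IsAddCyclic.sum_addOrderOf {G M : Type*} [AddGroup G] [Fintype G] [IsAddCyclic G]
    [AddCommMonoid M] (f : ℕ → M) :
    ∑ g : G, f (addOrderOf g) = ∑ m ∈ (Fintype.card G).divisors, φ m • f m := by
  classical
  rw [← sum_fiberwise_of_maps_to (g := addOrderOf) (t := (Fintype.card G).divisors)
    fun g _ => mem_divisors.mpr ⟨addOrderOf_dvd_card, Fintype.card_ne_zero⟩]
  refine sum_congr rfl fun m hm => ?_
  rw [sum_congr rfl fun g hg => congrArg f (mem_filter.mp hg).2, sum_const,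
    IsAddCyclic.card_addOrderOf_eq_totient (mem_divisors.mp hm).1]

lemma IsAddCyclic.card_mul_card_orbits_powersetCard {G : Type*} [AddCommGroup G] [Fintype G]
    [DecidableEq G] [IsAddCyclic G] (k : ℕ) :
    Fintype.card G * Nat.card (AddAction.orbitRel.Quotient G (Set.powersetCard G k)) =
      ∑ m ∈ (Fintype.card G).divisors with m ∣ k, φ m * (Fintype.card G / m).choose (k / m) := by
  classical
  have := Fintype.ofFinite (AddAction.orbitRel.Quotient G (Set.powersetCard G k))
  rw [Nat.card_eq_fintype_card, mul_comm,
    ← AddAction.sum_card_fixedBy_eq_card_orbits_mul_card_addGroup]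
  simp_rw [← Nat.card_eq_fintype_card, Set.powersetCard.card_fixedBy, Nat.card_eq_fintype_card]
  rw [sum_addOrderOf (fun m => if m ∣ k then (Fintype.card G / m).choose (k / m) else 0),
    sum_filter]
  simp_rw [smul_eq_mul, mul_ite, mul_zero]

/-- For every positive integer `n`, the quantity
`(1/(2n)) * Σ_{d | n} φ(n/d) * C(2d, d)` is a positive integer. -/
theorem stmt_0 (n : ℕ) (hn : 0 < n) :
    ∃ k : ℕ, 0 < k ∧
      (∑ d ∈ n.divisors, Nat.totient (n / d) * Nat.choose (2 * d) d) = 2 * n * k := by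
  have : NeZero (2 * n) := ⟨by omega⟩
  have : Nonempty
      (AddAction.orbitRel.Quotient (ZMod (2 * n)) (Set.powersetCard (ZMod (2 * n)) n)) := by
    obtain ⟨s, -, hs⟩ := exists_subset_card_eq
      (show n ≤ #(univ : Finset (ZMod (2 * n))) by rw [Finset.card_univ, ZMod.card]; omega)
    exact ⟨Quotient.mk'' ⟨s, Set.powersetCard.mem_iff.mpr hs⟩⟩
  have hcount := IsAddCyclic.card_mul_card_orbits_powersetCard (G := ZMod (2 * n)) n
  rw [ZMod.card] at hcount
  refine ⟨_, Nat.card_pos, hcount.trans ?_ |>.symm⟩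
  have hdivisors : {m ∈ (2 * n).divisors | m ∣ n} = n.divisors := by
    ext m
    simp only [mem_filter, mem_divisors]
    exact ⟨fun h => ⟨h.2, by omega⟩, fun h => ⟨⟨h.1.mul_left 2, by omega⟩, h.1⟩⟩
  rw [hdivisors, ← Nat.sum_div_divisors]
  refine sum_congr rfl fun d hd => ?_
  obtain ⟨hdn, -⟩ := mem_divisors.mp hd
  rw [Nat.div_div_self hdn hn.ne', Nat.mul_div_assoc _ (Nat.div_dvd_of_dvd hdn),
    Nat.div_div_self hdn hn.ne']
end

section
/- Let f: ℕ → ℕ be given on positive integers n by f(n) = C(2n, n) (the central binomial coefficient). Then the number of orbits of the cyclic group Z/n acting by rotation on the set of ordered forests of full binary plane trees with n total leaves equals (1/(2n)) Σ_{d|n} φ(n/d) C(2d, d). -/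
/-- A full binary plane tree: every internal node has exactly two ordered children. -/
inductive FullBinTree : Type
  | leaf : FullBinTree
  | node : FullBinTree → FullBinTree → FullBinTree

/-- The number of leaves of a full binary plane tree. -/
def FullBinTree.numLeaves : FullBinTree → ℕ
  | .leaf => 1
  | .node l r => l.numLeaves + r.numLeaves

/-- Two ordered forests of full binary plane trees with `n` total leaves are in the
same orbit of the rotation action of `Z/n` if one is obtained from the other by a
cyclic rotation. -/
def ForestRotRel (n : ℕ)
    (l l' : {l : List FullBinTree //
      l ≠ [] ∧ (l.map FullBinTree.numLeaves).sum = n}) : Prop :=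
  ∃ k : ZMod n, l'.1 = l.1.rotate k.val

/-!
Encode a full binary tree `t` as the Dyck word `U w D`, where `w` is the Dyck word of the binary
tree obtained by deleting the leaves of `t`, and a forest as the concatenation of the words of
its trees. This is a bijection from forests with `n` leaves onto the nonempty Dyck words of
length `2n`, under which rotating the forest is rotating the word at a tree boundary. By the cycle
lemma every word with `n` letters `U` and `n` letters `D` has a rotation that is a Dyck word, and
a rotation of a Dyck word is again one only at a tree boundary; so forests up to rotation are
words up to rotation by `ℤ/2n`. Burnside's lemma counts the latter: rotation by `a` fixes exactly
the `2n/g`-th powers of the words of length `g = gcd(2n, a)` with `g/2` letters `U`, and there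
are `φ(2n/g)` residues `a` for each divisor `g` of `2n`; only even `g = 2d` contribute.
-/

namespace List

variable {α : Type*}

theorem isPeriodicPt_rotate_one_iff {l : List α} {j : ℕ} :
    Function.IsPeriodicPt (·.rotate 1) j l ↔ l.rotate j = l := by
  suffices ∀ l : List α, (·.rotate 1)^[j] l = l.rotate j by
    rw [Function.IsPeriodicPt, Function.IsFixedPt, this]
  induction j with
  | zero => simp
  | succ j ih => intro l; rw [Function.iterate_succ_apply, ih, rotate_rotate, add_comm]

theorem rotate_eq_self_iff_rotate_gcd {l : List α} {j : ℕ} :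
    l.rotate j = l ↔ l.rotate (l.length.gcd j) = l := by
  simp only [← isPeriodicPt_rotate_one_iff]
  refine ⟨(isPeriodicPt_rotate_one_iff.2 (rotate_length l)).gcd, fun h => ?_⟩
  obtain ⟨k, hk⟩ := Nat.gcd_dvd_right l.length j
  exact hk ▸ h.mul_const k

theorem eq_flatten_replicate_of_append_comm {u : List α} :
    ∀ (m : ℕ) {v : List α}, v.length = u.length * m → u ++ v = v ++ u →
      v = (replicate m u).flatten
  | 0, v, hv, _ => by simpa using hv
  | m + 1, v, hv, h => by
    have hu : v.take u.length = u := by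
      have huv : u.length ≤ v.length := hv ▸ Nat.le_mul_of_pos_right _ m.succ_pos
      simpa [take_append_of_le_length huv] using (congrArg (take u.length) h).symm
    rw [← take_append_drop u.length v, hu] at h ⊢
    rw [append_assoc, append_cancel_left_eq] at h
    rw [eq_flatten_replicate_of_append_comm m (by simp [hv]; lia) h, replicate_succ, flatten_cons]

theorem rotate_length_flatten_replicate (u : List α) (m : ℕ) :
    (replicate m u).flatten.rotate u.length = (replicate m u).flatten := by
  cases m with
  | zero => simp
  | succ m =>
    conv_rhs => rw [replicate_succ', flatten_append]
    rw [replicate_succ, flatten_cons, rotate_append_length_eq, flatten_singleton]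

theorem rotate_eq_self_iff_exists_flatten_replicate {l : List α} {g m : ℕ}
    (hl : l.length = g * (m + 1)) :
    l.rotate g = l ↔ ∃ u : List α, u.length = g ∧ (replicate (m + 1) u).flatten = l := by
  constructor
  · intro h
    have hg : g ≤ l.length := hl ▸ Nat.le_mul_of_pos_right g m.succ_pos
    refine ⟨l.take g, length_take_of_le hg, ?_⟩
    conv_rhs => rw [← take_append_drop g l]
    rw [replicate_succ, flatten_cons, ← eq_flatten_replicate_of_append_comm m _ _]
    · simp [hl]; lia
    · conv_lhs => rw [take_append_drop, ← h, rotate_eq_drop_append_take hg]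
  · rintro ⟨u, rfl, rfl⟩
    exact rotate_length_flatten_replicate u _

theorem count_flatten_replicate [BEq α] (a : α) (u : List α) (m : ℕ) :
    (replicate m u).flatten.count a = m * u.count a := by
  simp [count_flatten]

theorem ncard_rotate_eq_self [BEq α] (a : α) {L : ℕ} (hL : 0 < L) (j k : ℕ) :
    {l : List α | (l.length = L ∧ l.count a = k) ∧ l.rotate j = l}.ncard =
      {u : List α | u.length = L.gcd j ∧ L / L.gcd j * u.count a = k}.ncard := by
  set g := L.gcd j
  obtain ⟨m, hm⟩ : ∃ m, L / g = m + 1 :=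
    Nat.exists_eq_add_one.2 (Nat.div_pos (Nat.gcd_le_left j hL) (Nat.gcd_pos_of_pos_left j hL))
  have hgm : L = g * (m + 1) := by rw [← hm, Nat.mul_div_cancel' (Nat.gcd_dvd_left L j)]
  have hinj : Set.InjOn (fun u => (replicate (m + 1) u).flatten) {u : List α | u.length = g} := by
    intro u hu u' hu' h
    simpa only [replicate_succ, flatten_cons, take_left' hu, take_left' hu'] using
      congrArg (take g) h
  rw [hm, ← (hinj.mono (s₁ := {u : List α | u.length = g ∧ (m + 1) * u.count a = k})
    fun u hu => hu.1).ncard_image]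
  congr 1
  ext l
  simp only [Set.mem_ofPred_eq, Set.mem_image]
  constructor
  · rintro ⟨⟨hl, hk⟩, hrot⟩
    rw [rotate_eq_self_iff_rotate_gcd, hl,
      rotate_eq_self_iff_exists_flatten_replicate (hl.trans hgm)] at hrot
    obtain ⟨u, hu, rfl⟩ := hrot
    exact ⟨u, ⟨hu, by rwa [count_flatten_replicate] at hk⟩, rfl⟩
  · rintro ⟨u, ⟨hu, hk⟩, rfl⟩
    have hlen : ((replicate (m + 1) u).flatten).length = L := by simp [hu, hgm]; ring
    refine ⟨⟨hlen, by rwa [count_flatten_replicate]⟩, ?_⟩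
    rw [rotate_eq_self_iff_rotate_gcd, hlen,
      rotate_eq_self_iff_exists_flatten_replicate (hlen.trans hgm)]
    exact ⟨u, hu, rfl⟩

end List

section

open Finset

theorem ZMod.sum_val {M : Type*} [AddCommMonoid M] (L : ℕ) [NeZero L] (f : ℕ → M) :
    ∑ a : ZMod L, f a.val = ∑ i ∈ range L, f i := by
  obtain _ | L := L
  · exact absurd rfl (NeZero.ne 0)
  · exact Fin.sum_univ_eq_sum_range f (L + 1)

theorem Nat.sum_range_gcd {M : Type*} [AddCommMonoid M] (L : ℕ) (f : ℕ → M) :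
    ∑ i ∈ range L, f (L.gcd i) = ∑ d ∈ L.divisors, Nat.totient (L / d) • f d := by
  rw [← sum_fiberwise_of_maps_to (g := L.gcd) (t := L.divisors) fun i hi =>
    Nat.mem_divisors.2 ⟨Nat.gcd_dvd_left L i, by have := mem_range.1 hi; omega⟩]
  refine sum_congr rfl fun d hd => ?_
  rw [Nat.totient_div_of_dvd (Nat.dvd_of_mem_divisors hd), ← sum_const]
  exact sum_congr rfl fun i hi => by rw [(mem_filter.1 hi).2]

theorem Nat.sum_divisors_two_mul {M : Type*} [AddCommMonoid M] (n : ℕ) (f : ℕ → M)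
    (hf : ∀ d, ¬ 2 ∣ d → f d = 0) :
    ∑ d ∈ (2 * n).divisors, f d = ∑ e ∈ n.divisors, f (2 * e) := by
  calc ∑ d ∈ (2 * n).divisors, f d
      = ∑ d ∈ n.divisors.map ⟨(2 * ·), mul_right_injective₀ two_ne_zero⟩, f d := by
        refine (sum_subset (fun d hd => ?_) fun d hd hd' => hf d fun ⟨e, he⟩ => hd' ?_).symm
        · obtain ⟨e, he, rfl⟩ := mem_map.1 hd
          obtain ⟨hen, hn⟩ := Nat.mem_divisors.1 he
          exact Nat.mem_divisors.2 ⟨Nat.mul_dvd_mul_left 2 hen, by simpa using hn⟩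
        · obtain ⟨hdn, hn⟩ := Nat.mem_divisors.1 hd
          subst he
          exact mem_map.2 ⟨e, Nat.mem_divisors.2 ⟨Nat.dvd_of_mul_dvd_mul_left two_pos hdn,
            by simpa using hn⟩, rfl⟩
    _ = _ := sum_map _ _ _

theorem AddAction.sum_natCard_fixedBy (G X : Type*) [AddGroup G] [AddAction G X] [Fintype G]
    [Finite X] :
    ∑ g : G, Nat.card (fixedBy X g) = Nat.card (orbitRel.Quotient G X) * Nat.card G := by
  classical
  have := Fintype.ofFinite X
  have := Fintype.ofFinite (orbitRel.Quotient G X)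
  simpa only [Nat.card_eq_fintype_card] using
    sum_card_fixedBy_eq_card_orbits_mul_card_addGroup G X

theorem Nat.card_quot_eq_card_quotient {α β : Type*} {r : α → α → Prop} {s : Setoid β}
    (f : α → β) (hf : ∀ a a', s (f a) (f a') ↔ r a a') (hsurj : ∀ b, ∃ a, s (f a) b) :
    Nat.card (Quot r) = Nat.card (Quotient s) := by
  refine Nat.card_congr (Equiv.ofBijective
    (Quot.lift (fun a => ⟦f a⟧) fun a a' h => Quotient.sound ((hf a a').2 h)) ⟨?_, ?_⟩)
  · rintro ⟨a⟩ ⟨a'⟩ h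
    exact Quot.sound ((hf a a').1 (Quotient.exact h))
  · rintro ⟨b⟩
    obtain ⟨a, ha⟩ := hsurj b
    exact ⟨Quot.mk _ a, Quotient.sound ha⟩

end

open List DyckStep

instance : Finite DyckStep :=
  Finite.of_surjective (fun b : Bool => if b then U else D) fun s => by cases s <;> simp

theorem List.ncard_length_count_U (g c : ℕ) :
    {l : List DyckStep | l.length = g ∧ l.count U = c}.ncard = g.choose c := by
  induction g generalizing c with
  | zero =>
    cases c with
    | zero =>
      rw [Nat.choose_zero_right]
      convert Set.ncard_singleton ([] : List DyckStep)
      ext l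
      simp +contextual [List.length_eq_zero_iff]
    | succ c =>
      rw [Nat.choose_zero_succ]
      convert Set.ncard_empty (List DyckStep)
      ext l
      simp +contextual [List.length_eq_zero_iff]
  | succ g ih =>
    have hfin : ∀ c, {l : List DyckStep | l.length = g ∧ l.count U = c}.Finite := fun c =>
      (List.finite_length_eq DyckStep g).subset fun l hl => hl.1
    cases c with
    | zero =>
      have : {l : List DyckStep | l.length = g + 1 ∧ l.count U = 0} =
          List.cons D '' {l | l.length = g ∧ l.count U = 0} := by
        ext (_ | ⟨_ | _, l⟩) <;> simp
      rw [this, List.cons_injective.injOn.ncard_image, ih, Nat.choose_zero_right,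
        Nat.choose_zero_right]
    | succ c =>
      have : {l : List DyckStep | l.length = g + 1 ∧ l.count U = c + 1} =
          List.cons U '' {l | l.length = g ∧ l.count U = c} ∪
            List.cons D '' {l | l.length = g ∧ l.count U = c + 1} := by
        ext (_ | ⟨_ | _, l⟩) <;> simp
      have hdisj : _root_.Disjoint (List.cons U '' {l | l.length = g ∧ l.count U = c})
          (List.cons D '' {l | l.length = g ∧ l.count U = c + 1}) :=
        Set.disjoint_left.2 fun _ ⟨_, _, h1⟩ ⟨_, _, h2⟩ => by simp [← h1] at h2
      rw [this, Set.ncard_union_eq hdisj ((hfin c).image _) ((hfin _).image _),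
        List.cons_injective.injOn.ncard_image, List.cons_injective.injOn.ncard_image, ih, ih,
        Nat.choose_succ_succ]

theorem List.ncard_length_two_mul_count_U (g : ℕ) :
    {u : List DyckStep | u.length = g ∧ 2 * u.count U = g}.ncard =
      if 2 ∣ g then g.choose (g / 2) else 0 := by
  split_ifs with h
  · obtain ⟨e, rfl⟩ := h
    rw [Nat.mul_div_cancel_left e two_pos, ← ncard_length_count_U]
    congr 1
    ext u
    simp only [Set.mem_ofPred_eq]
    omega
  · convert Set.ncard_empty (List DyckStep)
    ext u
    simp only [Set.mem_ofPred_eq, Set.mem_empty_iff_false, iff_false]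
    exact fun hu => h ⟨_, hu.2.symm⟩

theorem List.count_U_add_count_D (l : List DyckStep) : l.count U + l.count D = l.length := by
  induction l with
  | nil => rfl
  | cons s l ih => cases s <;> simp <;> omega

namespace DyckWord

theorem count_D_lt_count_U_take_nest (p : DyckWord) {i : ℕ} (h0 : 0 < i)
    (hi : i < p.nest.toList.length) :
    (p.nest.toList.take i).count D < (p.nest.toList.take i).count U := by
  obtain ⟨i, rfl⟩ := Nat.exists_eq_add_of_lt h0
  refine count_D_lt_count_U_of_lt_firstReturn ?_
  rw [firstReturn_nest]
  simp [nest] at hi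
  omega

theorem count_take_eq_of_rotate_eq {p q : DyckWord} {j : ℕ} (hj : j ≤ p.toList.length)
    (h : p.toList.rotate j = q.toList) :
    (p.toList.take j).count U = (p.toList.take j).count D := by
  rw [rotate_eq_drop_append_take hj] at h
  have hdrop := q.count_D_le_count_U (p.toList.drop j).length
  rw [← h, take_left] at hdrop
  have htake := p.count_D_le_count_U j
  have htotal := p.count_U_eq_count_D
  rw [← take_append_drop j p.toList, count_append, count_append] at htotal
  omega

/-- The cycle lemma: started at a lowest point of its lattice path, a word with as many `U`s as
`D`s becomes a Dyck word. -/
theorem exists_toList_eq_rotate {w : List DyckStep} (hw : w.count U = w.count D) :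
    ∃ j, ∃ p : DyckWord, p.toList = w.rotate j := by
  let height (l : List DyckStep) : ℤ := l.count U - l.count D
  have height_append (l l' : List DyckStep) : height (l ++ l') = height l + height l' := by
    simp only [height, count_append]; push_cast; ring
  obtain ⟨j, hjL, hj⟩ := Finset.exists_min_image (Finset.range (w.length + 1))
    (fun i => height (w.take i)) ⟨0, by simp⟩
  replace hjL : j ≤ w.length := Nat.lt_succ_iff.1 (Finset.mem_range.1 hjL)
  have height_take_of_le {i} (hi : w.length ≤ i) : height (w.take i) = 0 := by
    simp [height, take_of_length_le hi, hw]
  have hmin (i : ℕ) : height (w.take j) ≤ height (w.take i) := by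
    rcases le_or_gt i w.length with hi | hi
    · exact hj i (Finset.mem_range.2 (Nat.lt_succ_of_le hi))
    · rw [height_take_of_le hi.le, ← height_take_of_le le_rfl]; exact hj _ (by simp)
  refine ⟨j, ⟨w.rotate j, by simp only [(rotate_perm w j).count_eq, hw], fun i => ?_⟩, rfl⟩
  suffices 0 ≤ height ((w.rotate j).take i) by simp only [height] at this; omega
  have hdrop := congrArg height (take_add (l := w) (i := j) (j := i))
  rw [height_append] at hdrop
  rw [rotate_eq_drop_append_take hjL, take_append, take_take, height_append]
  rcases Nat.eq_zero_or_pos (i - (w.drop j).length) with hk | hk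
  · rw [hk, Nat.zero_min, take_zero]
    linarith [hmin (j + i), show height [] = 0 from rfl]
  · rw [height_take_of_le (by simp at hk; omega)] at hdrop
    linarith [hmin (min (i - (w.drop j).length) j)]

end DyckWord

namespace FullBinTree

theorem one_le_numLeaves (t : FullBinTree) : 1 ≤ t.numLeaves := by
  induction t with
  | leaf => exact le_rfl
  | node l r ihl _ => exact ihl.trans (Nat.le_add_right _ _)

theorem length_le_sum_numLeaves (F : List FullBinTree) :
    F.length ≤ (F.map numLeaves).sum := by
  simpa using length_le_sum_of_one_le (F.map numLeaves) (by simp [one_le_numLeaves])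

def toBinaryTree : FullBinTree → BinaryTree Unit
  | leaf => .nil
  | node l r => .node () l.toBinaryTree r.toBinaryTree

def ofBinaryTree : BinaryTree Unit → FullBinTree
  | .nil => leaf
  | .node _ l r => node (ofBinaryTree l) (ofBinaryTree r)

theorem ofBinaryTree_toBinaryTree (t : FullBinTree) : ofBinaryTree t.toBinaryTree = t := by
  induction t <;> simp_all [toBinaryTree, ofBinaryTree]

theorem toBinaryTree_ofBinaryTree (T : BinaryTree Unit) : (ofBinaryTree T).toBinaryTree = T := by
  induction T <;> simp_all [toBinaryTree, ofBinaryTree]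

theorem numNodes_toBinaryTree (t : FullBinTree) : t.toBinaryTree.numNodes + 1 = t.numLeaves := by
  induction t <;> simp_all [toBinaryTree, numLeaves, BinaryTree.numNodes]; omega

/-- A forest `[t₁, …, tₖ]` becomes the right comb whose left subtrees are `t₁, …, tₖ`. -/
def forestToBinaryTree : List FullBinTree → BinaryTree Unit
  | [] => .nil
  | t :: F => .node () t.toBinaryTree (forestToBinaryTree F)

def forestOfBinaryTree : BinaryTree Unit → List FullBinTree
  | .nil => []
  | .node _ l r => ofBinaryTree l :: forestOfBinaryTree r

def forestEquivBinaryTree : List FullBinTree ≃ BinaryTree Unit where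
  toFun := forestToBinaryTree
  invFun := forestOfBinaryTree
  left_inv F := by
    induction F <;> simp_all [forestToBinaryTree, forestOfBinaryTree, ofBinaryTree_toBinaryTree]
  right_inv T := by
    induction T <;> simp_all [forestToBinaryTree, forestOfBinaryTree, toBinaryTree_ofBinaryTree]

def forestEquivDyckWord : List FullBinTree ≃ DyckWord :=
  forestEquivBinaryTree.trans DyckWord.equivTree.symm

theorem forestEquivDyckWord_nil : forestEquivDyckWord [] = 0 := rfl

theorem forestEquivDyckWord_cons (t : FullBinTree) (F : List FullBinTree) :
    forestEquivDyckWord (t :: F) =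
      (DyckWord.ofTree t.toBinaryTree).nest + forestEquivDyckWord F := rfl

theorem forestEquivDyckWord_append (F G : List FullBinTree) :
    forestEquivDyckWord (F ++ G) = forestEquivDyckWord F + forestEquivDyckWord G := by
  induction F with
  | nil => exact (zero_add _).symm
  | cons t F ih =>
    rw [cons_append, forestEquivDyckWord_cons, forestEquivDyckWord_cons, ih, add_assoc]

theorem semilength_forestEquivDyckWord (F : List FullBinTree) :
    (forestEquivDyckWord F).semilength = (F.map numLeaves).sum := by
  induction F with
  | nil => rfl
  | cons t F ih =>
    rw [forestEquivDyckWord_cons, DyckWord.semilength_add, DyckWord.semilength_nest, ih,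
      ← DyckWord.numNodes_toTree, DyckWord.toTree_ofTree, numNodes_toBinaryTree, List.map_cons,
      sum_cons]

theorem toList_forestEquivDyckWord_rotate (F : List FullBinTree) {c : ℕ} (hc : c ≤ F.length) :
    (forestEquivDyckWord (F.rotate c)).toList =
      (forestEquivDyckWord F).toList.rotate (forestEquivDyckWord (F.take c)).toList.length := by
  have hF : forestEquivDyckWord F =
      forestEquivDyckWord (F.take c) + forestEquivDyckWord (F.drop c) := by
    rw [← forestEquivDyckWord_append, take_append_drop]
  rw [hF, rotate_eq_drop_append_take hc, forestEquivDyckWord_append]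
  exact (rotate_append_length_eq _ _).symm

theorem exists_length_toList_take_eq (F : List FullBinTree) {j : ℕ}
    (hj : j ≤ (forestEquivDyckWord F).toList.length)
    (hb : ((forestEquivDyckWord F).toList.take j).count U =
      ((forestEquivDyckWord F).toList.take j).count D) :
    ∃ c ≤ F.length, (forestEquivDyckWord (F.take c)).toList.length = j := by
  induction F generalizing j with
  | nil => exact ⟨0, le_rfl, (Nat.le_zero.1 hj).symm⟩
  | cons t F ih =>
    set p := (DyckWord.ofTree t.toBinaryTree).nest
    have hsplit : (forestEquivDyckWord (t :: F)).toList =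
        p.toList ++ (forestEquivDyckWord F).toList := rfl
    rcases Nat.eq_zero_or_pos j with rfl | hj0
    · exact ⟨0, by simp, rfl⟩
    rcases lt_or_ge j p.toList.length with hjp | hjp
    · rw [hsplit, take_append_of_le_length hjp.le] at hb
      exact absurd hb (DyckWord.count_D_lt_count_U_take_nest _ hj0 hjp).ne'
    · rw [hsplit, take_append, take_of_length_le hjp, count_append, count_append,
        p.count_U_eq_count_D, Nat.add_left_cancel_iff] at hb
      obtain ⟨c, hc, hcj⟩ := ih (by rw [hsplit, length_append] at hj; omega) hb
      refine ⟨c + 1, Nat.succ_le_succ hc, ?_⟩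
      rw [take_succ_cons, forestEquivDyckWord_cons]
      change (p.toList ++ _).length = j
      rw [length_append, hcj]
      omega

theorem forestEquivDyckWord_isRotated_iff {F G : List FullBinTree} :
    (forestEquivDyckWord F).toList ~r (forestEquivDyckWord G).toList ↔ F ~r G := by
  constructor
  · intro h
    obtain ⟨j, hj, hrot⟩ := isRotated_iff_mod.1 h
    obtain ⟨c, hc, rfl⟩ :=
      exists_length_toList_take_eq F hj (DyckWord.count_take_eq_of_rotate_eq hj hrot)
    rw [← toList_forestEquivDyckWord_rotate F hc] at hrot
    exact ⟨c, forestEquivDyckWord.injective (DyckWord.ext hrot)⟩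
  · intro h
    obtain ⟨c, hc, rfl⟩ := isRotated_iff_mod.1 h
    rw [toList_forestEquivDyckWord_rotate F hc]
    exact (IsRotated.forall _ _).symm

end FullBinTree

theorem forestRotRel_iff_isRotated {n : ℕ}
    (F G : {l : List FullBinTree // l ≠ [] ∧ (l.map FullBinTree.numLeaves).sum = n}) :
    ForestRotRel n F G ↔ F.1 ~r G.1 := by
  constructor
  · rintro ⟨k, hk⟩
    exact ⟨k.val, hk.symm⟩
  · rintro ⟨c, hc⟩
    have hlen : F.1.length ≤ n := (FullBinTree.length_le_sum_numLeaves F.1).trans_eq F.2.2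
    have hpos : 0 < F.1.length := length_pos_iff.2 F.2.1
    refine ⟨((c % F.1.length : ℕ) : ZMod n), ?_⟩
    rw [ZMod.val_cast_of_lt ((Nat.mod_lt _ hpos).trans_le hlen), rotate_mod, hc]

abbrev BalancedWord (n : ℕ) : Type := {w : List DyckStep // w.length = 2 * n ∧ w.count U = n}

namespace BalancedWord

variable {n : ℕ}

instance : Finite (BalancedWord n) :=
  ((List.finite_length_eq DyckStep (2 * n)).subset fun _ hw => hw.1).to_subtype

instance [NeZero n] : AddAction (ZMod (2 * n)) (BalancedWord n) where
  vadd k w := ⟨w.1.rotate k.val, by rw [length_rotate, w.2.1],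
    by rw [(rotate_perm _ _).count_eq, w.2.2]⟩
  zero_vadd w := Subtype.ext <| by
    show w.1.rotate (0 : ZMod (2 * n)).val = w.1
    rw [ZMod.val_zero, rotate_zero]
  add_vadd a b w := Subtype.ext <| by
    show w.1.rotate (a + b).val = (w.1.rotate b.val).rotate a.val
    rw [rotate_rotate, ZMod.val_add, ← rotate_mod w.1 (b.val + a.val), w.2.1, add_comm]

variable [NeZero n]

theorem val_vadd (k : ZMod (2 * n)) (w : BalancedWord n) : (k +ᵥ w).1 = w.1.rotate k.val := rfl

theorem orbitRel_iff (w w' : BalancedWord n) :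
    AddAction.orbitRel (ZMod (2 * n)) (BalancedWord n) w w' ↔ w.1 ~r w'.1 := by
  rw [AddAction.orbitRel_apply, isRotated_comm]
  constructor
  · rintro ⟨k, hk⟩
    exact ⟨k.val, congrArg Subtype.val hk⟩
  · rintro ⟨c, hc⟩
    refine ⟨c, Subtype.ext ?_⟩
    rw [val_vadd, ZMod.val_natCast, ← hc, ← rotate_mod w'.1 c, w'.2.1]

def ofForest (F : {l : List FullBinTree // l ≠ [] ∧ (l.map FullBinTree.numLeaves).sum = n}) :
    BalancedWord n :=
  ⟨(FullBinTree.forestEquivDyckWord F.1).toList,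
    by rw [← DyckWord.two_mul_semilength_eq_length, FullBinTree.semilength_forestEquivDyckWord,
      F.2.2],
    (FullBinTree.semilength_forestEquivDyckWord F.1).trans F.2.2⟩

theorem exists_orbitRel_ofForest (w : BalancedWord n) :
    ∃ F, AddAction.orbitRel (ZMod (2 * n)) (BalancedWord n) (ofForest F) w := by
  have hcount : w.1.count U = w.1.count D := by
    have := count_U_add_count_D w.1
    rw [w.2.1, w.2.2] at this
    rw [w.2.2]
    omega
  obtain ⟨j, p, hp⟩ := DyckWord.exists_toList_eq_rotate hcount
  set F := FullBinTree.forestEquivDyckWord.symm p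
  have hFp : FullBinTree.forestEquivDyckWord F = p := Equiv.apply_symm_apply _ _
  have hsemi : (FullBinTree.forestEquivDyckWord F).semilength = n := by
    rw [hFp]
    show p.toList.count U = n
    rw [hp, (rotate_perm _ _).count_eq, w.2.2]
  have hne : F ≠ [] := by
    rintro hF
    rw [hF, FullBinTree.forestEquivDyckWord_nil] at hsemi
    exact NeZero.ne n hsemi.symm
  refine ⟨⟨F, hne, (FullBinTree.semilength_forestEquivDyckWord F).symm.trans hsemi⟩, ?_⟩
  rw [orbitRel_iff]
  show (FullBinTree.forestEquivDyckWord F).toList ~r w.1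
  rw [hFp, hp]
  exact IsRotated.forall _ _

theorem natCard_fixedBy (a : ZMod (2 * n)) :
    Nat.card (AddAction.fixedBy (BalancedWord n) a) =
      {u : List DyckStep | u.length = (2 * n).gcd a.val ∧
        2 * u.count U = (2 * n).gcd a.val}.ncard := by
  have hfix : Subtype.val '' AddAction.fixedBy (BalancedWord n) a =
      {l | (l.length = 2 * n ∧ l.count U = n) ∧ l.rotate a.val = l} := by
    ext l
    simp only [Set.mem_image, AddAction.mem_fixedBy, Subtype.ext_iff, val_vadd, Subtype.exists,
      exists_and_right, exists_eq_right, Set.mem_ofPred_eq, exists_prop]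
  rw [Nat.card_coe_set_eq, ← Subtype.val_injective.injOn.ncard_image, hfix,
    ncard_rotate_eq_self U (Nat.pos_of_neZero (2 * n))]
  obtain ⟨m, hm⟩ := Nat.gcd_dvd_left (2 * n) a.val
  have hg : 0 < (2 * n).gcd a.val := Nat.gcd_pos_of_pos_left _ (Nat.pos_of_neZero (2 * n))
  have hn : 0 < n := Nat.pos_of_neZero n
  congr 1
  ext u
  simp only [Set.mem_ofPred_eq]
  rw [Nat.div_eq_of_eq_mul_right hg hm]
  refine and_congr_right fun _ => ⟨fun h => ?_, fun h => ?_⟩ <;> nlinarith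

theorem sum_natCard_fixedBy :
    ∑ a : ZMod (2 * n), Nat.card (AddAction.fixedBy (BalancedWord n) a) =
      ∑ d ∈ n.divisors, Nat.totient (n / d) * (2 * d).choose d := by
  let Q g := {u : List DyckStep | u.length = g ∧ 2 * u.count U = g}.ncard
  calc ∑ a : ZMod (2 * n), Nat.card (AddAction.fixedBy (BalancedWord n) a)
      = ∑ a : ZMod (2 * n), Q ((2 * n).gcd a.val) := by simp only [natCard_fixedBy, Q]
    _ = ∑ d ∈ (2 * n).divisors, Nat.totient (2 * n / d) • Q d := by
      rw [ZMod.sum_val (2 * n) fun i => Q ((2 * n).gcd i), Nat.sum_range_gcd]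
    _ = ∑ e ∈ n.divisors, Nat.totient (2 * n / (2 * e)) • Q (2 * e) :=
      Nat.sum_divisors_two_mul n _ fun d hd => by simp [Q, ncard_length_two_mul_count_U, hd]
    _ = _ := Finset.sum_congr rfl fun e _ => by
      simp [Q, ncard_length_two_mul_count_U, Nat.mul_div_mul_left n e two_pos]

end BalancedWord

theorem natCard_quot_forestRotRel (n : ℕ) [NeZero n] :
    Nat.card (Quot (ForestRotRel n)) =
      Nat.card (AddAction.orbitRel.Quotient (ZMod (2 * n)) (BalancedWord n)) :=
  Nat.card_quot_eq_card_quotient BalancedWord.ofForest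
    (fun F G => by
      rw [BalancedWord.orbitRel_iff, forestRotRel_iff_isRotated]
      exact FullBinTree.forestEquivDyckWord_isRotated_iff)
    BalancedWord.exists_orbitRel_ofForest

/-- the number of orbits of the cyclic group `Z/n` acting by rotation
on ordered forests of full binary plane trees with `n` total leaves equals
`(1/(2n)) Σ_{d|n} φ(n/d) C(2d,d)`. -/
theorem stmt_10 (n : ℕ) (hn : 0 < n) :
    Nat.card (Quot (ForestRotRel n)) =
      (∑ d ∈ n.divisors, Nat.totient (n / d) * Nat.choose (2 * d) d) / (2 * n) := by
  have : NeZero n := ⟨hn.ne'⟩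
  have burnside := AddAction.sum_natCard_fixedBy (ZMod (2 * n)) (BalancedWord n)
  rw [BalancedWord.sum_natCard_fixedBy, Nat.card_zmod] at burnside
  rw [natCard_quot_forestRotRel, burnside, Nat.mul_div_cancel _ (by omega)]
end

section
/- If two triangulations of the punctured n-gon (n ≥ 5) differ by a rotation or by inverting all tags, then their associated quivers are isomorphic. -/
/-- A tagged edge of the punctured `n`-gon: a triple `(a, b, ε)`.  For `a ≠ b` it
represents the edge `M_{a,b}` (homotopic to the counterclockwise boundary path from
`a` to `b`, with the tag required to be `true`), and for `a = b` it represents a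
tagged edge `M_{a,a}^ε` joining the puncture to the boundary vertex `a`. -/
abbrev TEdge (n : ℕ) := Fin n × Fin n × Bool

/-- The number of counterclockwise steps from `a` to `x` on the boundary. -/
def ccwPos (n : ℕ) (a x : Fin n) : ℕ := (x.val + n - a.val) % n

/-- `x` lies strictly inside the counterclockwise boundary arc from `a` to `b`. -/
def InArc (n : ℕ) (a b x : Fin n) : Prop :=
  0 < ccwPos n a x ∧ ccwPos n a x < ccwPos n a b

/-- A valid tagged edge: either an edge `M_{a,a}^ε` between the puncture and the
boundary, or an ordinary edge `M_{a,b}` with `|δ_{a,b}| ≥ 3` and trivial tag. -/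
def ValidEdge (n : ℕ) (e : TEdge n) : Prop :=
  e.1 = e.2.1 ∨ (e.2.2 = true ∧ 2 ≤ ccwPos n e.1 e.2.1)

/-- The crossing relation (nonzero minimal crossing number) between tagged edges:
two edges between the puncture and the boundary cross iff they end at different
vertices and carry different tags; an edge between the puncture and the boundary
crosses an ordinary edge iff its boundary vertex lies strictly inside the arc cut
off; two ordinary edges cross iff their endpoints interleave, or each one lies
entirely strictly inside the puncture-free region cut off by the other. -/
def Cross (n : ℕ) (e f : TEdge n) : Prop :=
  if e.1 = e.2.1 then
    if f.1 = f.2.1 then e.1 ≠ f.1 ∧ e.2.2 ≠ f.2.2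
    else InArc n f.1 f.2.1 e.1
  else if f.1 = f.2.1 then InArc n e.1 e.2.1 f.1
  else
    Xor' (InArc n e.1 e.2.1 f.1) (InArc n e.1 e.2.1 f.2.1) ∨
      (InArc n e.1 e.2.1 f.1 ∧ InArc n e.1 e.2.1 f.2.1 ∧
        InArc n f.1 f.2.1 e.1 ∧ InArc n f.1 f.2.1 e.2.1)

/-- A triangulation of the punctured `n`-gon: a maximal set of pairwise
non-crossing (valid) tagged edges. -/
def IsTriangulation (n : ℕ) (Δ : Finset (TEdge n)) : Prop :=
  (∀ e ∈ Δ, ValidEdge n e) ∧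
    (∀ e ∈ Δ, ∀ f ∈ Δ, ¬Cross n e f) ∧
    (∀ e, ValidEdge n e → e ∉ Δ → ∃ f ∈ Δ, Cross n e f)

/-- The edge `e` is incident to the boundary vertex `p`. -/
def Incident (n : ℕ) (p : Fin n) (e : TEdge n) : Prop := e.1 = p ∨ e.2.1 = p

/-- Anticlockwise angular position at the boundary vertex `p` of an edge incident
to `p`: first the edges `M_{p,b}` leaving `p` (nested according to the arc they cut
off), then the tagged edges `M_{p,p}^ε` to the puncture, then the edges `M_{a,p}`
arriving at `p`. -/
def angKey (n : ℕ) (p : Fin n) (e : TEdge n) : ℕ :=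
  if e.1 = p ∧ e.2.1 = p then n + (if e.2.2 then 0 else 1)
  else if e.1 = p then ccwPos n p e.2.1
  else 2 * n + ccwPos n p e.1

/-- `β` is obtained from `α` by rotating anticlockwise about a common boundary
vertex `p`, with no edge of `Δ` strictly between them at `p` (so that `α` and `β`
bound a common triangle of `Δ`); the two tagged edges at a common vertex are
excluded. -/
def BoundaryArrow (n : ℕ) (Δ : Finset (TEdge n)) (α β : TEdge n) : Prop :=
  ∃ p : Fin n, Incident n p α ∧ Incident n p β ∧
    ¬(α.1 = α.2.1 ∧ β.1 = β.2.1) ∧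
    angKey n p α < angKey n p β ∧
    ∀ γ ∈ Δ, Incident n p γ →
      ¬(angKey n p α < angKey n p γ ∧ angKey n p γ < angKey n p β)

/-- `β` is obtained from `α` by rotating anticlockwise about the puncture: both are
edges between the puncture and the boundary and `β` is at the first vertex
counterclockwise after `α` carrying an edge of `Δ` to the puncture. -/
def PunctureArrow (n : ℕ) (Δ : Finset (TEdge n)) (α β : TEdge n) : Prop :=
  α.1 = α.2.1 ∧ β.1 = β.2.1 ∧ α.1 ≠ β.1 ∧
    ∀ γ ∈ Δ, γ.1 = γ.2.1 → γ.1 ≠ α.1 →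
      ¬(ccwPos n α.1 γ.1 < ccwPos n α.1 β.1)

/-- An arrow of the quiver of the triangulation `Δ`, before deleting 2-cycles. -/
def RawArrow (n : ℕ) (Δ : Finset (TEdge n)) (α β : TEdge n) : Prop :=
  α ∈ Δ ∧ β ∈ Δ ∧ α ≠ β ∧ (BoundaryArrow n Δ α β ∨ PunctureArrow n Δ α β)

/-- An arrow of the quiver `Q_Δ` associated to the triangulation `Δ` (oriented
2-cycles are deleted). -/
def QArrow (n : ℕ) (Δ : Finset (TEdge n)) (α β : TEdge n) : Prop :=
  RawArrow n Δ α β ∧ ¬RawArrow n Δ β α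

/-- Rotation of the punctured polygon by `k` vertices, acting on tagged edges. -/
def rotEdge (n : ℕ) (k : Fin n) (e : TEdge n) : TEdge n :=
  (e.1 + k, e.2.1 + k, e.2.2)

/-- Inversion of all tags: flips the tag on every edge incident to the puncture. -/
def invTags (n : ℕ) (e : TEdge n) : TEdge n :=
  (e.1, e.2.1, if e.1 = e.2.1 then !e.2.2 else e.2.2)

/-! Rotation by `k` shifts boundary vertices, the positions `ccwPos`, incidences and the
angular keys `angKey` all at once, so it carries the arrows of `Δ` to those of its image.
Tag inversion changes only the keys `n` and `n + 1` of the two tagged edges `M_{p,p}^±` at `p`,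
exchanging them; this preserves the angular order at every vertex unless both `M_{p,p}^+` and
`M_{p,p}^-` lie in `Δ`. In that case every other edge to the puncture would cross one of them,
so inversion maps `Δ` onto itself and the identity is an isomorphism of quivers. -/

namespace PuncturedPolygon

variable {n : ℕ}

theorem exists_equiv_qArrow_iff_of_injective {f : TEdge n → TEdge n}
    (hf : Function.Injective f) (Δ : Finset (TEdge n))
    (hB : ∀ α ∈ Δ, ∀ β ∈ Δ,
      BoundaryArrow n (Δ.image f) (f α) (f β) ↔ BoundaryArrow n Δ α β)
    (hP : ∀ α ∈ Δ, ∀ β ∈ Δ,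
      PunctureArrow n (Δ.image f) (f α) (f β) ↔ PunctureArrow n Δ α β) :
    ∃ g : {e // e ∈ Δ} ≃ {e // e ∈ Δ.image f},
      ∀ α β : {e // e ∈ Δ}, QArrow n Δ α.1 β.1 ↔ QArrow n (Δ.image f) (g α).1 (g β).1 := by
  have hraw : ∀ α ∈ Δ, ∀ β ∈ Δ, RawArrow n (Δ.image f) (f α) (f β) ↔ RawArrow n Δ α β :=
    fun α hα β hβ => by
      simp only [RawArrow, hf.mem_finset_image, hf.ne_iff, hB α hα β hβ, hP α hα β hβ]
  refine ⟨Equiv.ofBijective (fun a => ⟨f a, Finset.mem_image_of_mem f a.2⟩) ⟨?_, ?_⟩,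
    fun α β => ?_⟩
  · intro a b hab
    exact Subtype.ext (hf (congrArg Subtype.val hab))
  · rintro ⟨_, hb⟩
    obtain ⟨a, ha, rfl⟩ := Finset.mem_image.mp hb
    exact ⟨⟨a, ha⟩, rfl⟩
  · exact and_congr (hraw _ α.2 _ β.2).symm (not_congr (hraw _ β.2 _ α.2).symm)

lemma ccwPos_eq_val_sub (a x : Fin n) : ccwPos n a x = (x - a).val := by
  rw [Fin.sub_def, ccwPos]
  congr 1
  omega

lemma ccwPos_add_add [NeZero n] (k a x : Fin n) : ccwPos n (a + k) (x + k) = ccwPos n a x := by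
  rw [ccwPos_eq_val_sub, ccwPos_eq_val_sub, add_sub_add_right_eq_sub]

lemma rotEdge_injective (k : Fin n) : Function.Injective (rotEdge n k) := by
  rintro ⟨a, b, s⟩ ⟨c, d, t⟩ h
  simpa [rotEdge] using h

lemma rotEdge_fst_eq_snd_iff (k : Fin n) (e : TEdge n) :
    (rotEdge n k e).1 = (rotEdge n k e).2.1 ↔ e.1 = e.2.1 :=
  add_left_inj k

lemma incident_rotEdge (k p : Fin n) (e : TEdge n) :
    Incident n (p + k) (rotEdge n k e) ↔ Incident n p e := by
  simp [Incident, rotEdge]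

lemma angKey_rotEdge [NeZero n] (k p : Fin n) (e : TEdge n) :
    angKey n (p + k) (rotEdge n k e) = angKey n p e := by
  simp only [angKey, rotEdge, add_left_inj, ccwPos_add_add]
  rfl

lemma boundaryArrow_image_rotEdge [NeZero n] (k : Fin n) (Δ : Finset (TEdge n))
    (α β : TEdge n) :
    BoundaryArrow n (Δ.image (rotEdge n k)) (rotEdge n k α) (rotEdge n k β) ↔
      BoundaryArrow n Δ α β := by
  rw [BoundaryArrow, ← (Equiv.addRight k).exists_congr_right]
  simp only [Equiv.coe_addRight, incident_rotEdge, angKey_rotEdge, rotEdge_fst_eq_snd_iff,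
    Finset.forall_mem_image, BoundaryArrow]

lemma punctureArrow_image_rotEdge [NeZero n] (k : Fin n) (Δ : Finset (TEdge n))
    (α β : TEdge n) :
    PunctureArrow n (Δ.image (rotEdge n k)) (rotEdge n k α) (rotEdge n k β) ↔
      PunctureArrow n Δ α β := by
  simp only [PunctureArrow, rotEdge, add_left_inj, ne_eq, ccwPos_add_add,
    Finset.forall_mem_image]

lemma ccwPos_lt (a x : Fin n) : ccwPos n a x < n :=
  Nat.mod_lt _ a.pos

lemma swap_lt_swap_iff {m x y : ℕ} (hxy : ¬(x = m ∧ y = m + 1)) (hyx : ¬(x = m + 1 ∧ y = m)) :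
    Equiv.swap m (m + 1) x < Equiv.swap m (m + 1) y ↔ x < y := by
  simp only [Equiv.swap_apply_def]
  split_ifs <;> omega

lemma angKey_eq_self_iff (hn : 2 ≤ n) (p : Fin n) (e : TEdge n) :
    angKey n p e = n ↔ e = (p, p, true) := by
  obtain ⟨a, b, t⟩ := e
  have := ccwPos_lt p a
  have := ccwPos_lt p b
  unfold angKey
  split_ifs with h h' <;> cases t <;> simp_all <;> omega

lemma angKey_eq_succ_iff (hn : 2 ≤ n) (p : Fin n) (e : TEdge n) :
    angKey n p e = n + 1 ↔ e = (p, p, false) := by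
  obtain ⟨a, b, t⟩ := e
  have := ccwPos_lt p a
  have := ccwPos_lt p b
  unfold angKey
  split_ifs with h h' <;> cases t <;> simp_all <;> omega

lemma angKey_invTags (hn : 2 ≤ n) (p : Fin n) (e : TEdge n) :
    angKey n p (invTags n e) = Equiv.swap n (n + 1) (angKey n p e) := by
  by_cases hp : e.1 = p ∧ e.2.1 = p
  · obtain ⟨a, b, t⟩ := e
    obtain ⟨rfl, rfl⟩ : a = p ∧ b = p := hp
    cases t <;> simp [angKey, invTags]
  · have hne : e ≠ (p, p, true) ∧ e ≠ (p, p, false) := by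
      constructor <;> rintro rfl <;> exact hp ⟨rfl, rfl⟩
    rw [Equiv.swap_apply_of_ne_of_ne ((angKey_eq_self_iff hn p e).not.mpr hne.1)
      ((angKey_eq_succ_iff hn p e).not.mpr hne.2)]
    simp only [angKey, invTags, hp, if_false]
    rfl

lemma angKey_invTags_lt_iff (hn : 2 ≤ n) (p : Fin n) {e f : TEdge n}
    (hef : ¬(e = (p, p, true) ∧ f = (p, p, false)))
    (hfe : ¬(e = (p, p, false) ∧ f = (p, p, true))) :
    angKey n p (invTags n e) < angKey n p (invTags n f) ↔ angKey n p e < angKey n p f := by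
  rw [angKey_invTags hn, angKey_invTags hn, swap_lt_swap_iff] <;>
    simpa only [angKey_eq_self_iff hn, angKey_eq_succ_iff hn]

lemma incident_invTags (p : Fin n) (e : TEdge n) : Incident n p (invTags n e) ↔ Incident n p e :=
  Iff.rfl

lemma boundaryArrow_image_invTags (hn : 2 ≤ n) {Δ : Finset (TEdge n)}
    (hΔ : ∀ p, (p, p, true) ∈ Δ → (p, p, false) ∉ Δ) {α β : TEdge n} (hα : α ∈ Δ) (hβ : β ∈ Δ) :
    BoundaryArrow n (Δ.image (invTags n)) (invTags n α) (invTags n β) ↔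
      BoundaryArrow n Δ α β := by
  refine exists_congr fun p => ?_
  have hkey : ∀ e ∈ Δ, ∀ f ∈ Δ,
      angKey n p (invTags n e) < angKey n p (invTags n f) ↔ angKey n p e < angKey n p f :=
    fun e he f hf => angKey_invTags_lt_iff hn p (fun ⟨he', hf'⟩ => hΔ p (he' ▸ he) (hf' ▸ hf))
      (fun ⟨he', hf'⟩ => hΔ p (hf' ▸ hf) (he' ▸ he))
  simp +contextual only [Finset.forall_mem_image, incident_invTags, hkey, hα, hβ]
  rfl

lemma punctureArrow_image_invTags (Δ : Finset (TEdge n)) (α β : TEdge n) :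
    PunctureArrow n (Δ.image (invTags n)) (invTags n α) (invTags n β) ↔
      PunctureArrow n Δ α β := by
  simp only [PunctureArrow, Finset.forall_mem_image]
  rfl

lemma invTags_involutive : Function.Involutive (invTags n) := by
  rintro ⟨a, b, t⟩
  by_cases hab : a = b <;> simp [invTags, hab]

lemma image_invTags_eq_self {Δ : Finset (TEdge n)} (hΔ : ∀ e ∈ Δ, ∀ f ∈ Δ, ¬Cross n e f)
    {p : Fin n} (htrue : (p, p, true) ∈ Δ) (hfalse : (p, p, false) ∈ Δ) :
    Δ.image (invTags n) = Δ := by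
  have hmaps : ∀ e ∈ Δ, invTags n e ∈ Δ := by
    rintro ⟨a, b, t⟩ he
    by_cases hab : a = b
    · subst hab
      obtain rfl : a = p := by
        by_contra hap
        refine hΔ _ he (p, p, !t) (by cases t <;> assumption) ?_
        simp [Cross, hap]
      cases t <;> simpa [invTags]
    · simpa [invTags, hab] using he
  exact Finset.eq_of_subset_of_card_le (Finset.image_subset_iff.mpr hmaps)
    (Finset.card_image_of_injective _ invTags_involutive.injective).ge

end PuncturedPolygon

open PuncturedPolygon

theorem stmt_15_general (n : ℕ) (hn : 5 ≤ n) (Δ Δ' : Finset (TEdge n))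
    (hΔ : IsTriangulation n Δ)
    (h : (∃ k : Fin n, Δ' = Δ.image (rotEdge n k)) ∨ Δ' = Δ.image (invTags n)) :
    ∃ f : {e // e ∈ Δ} ≃ {e // e ∈ Δ'},
      ∀ α β : {e // e ∈ Δ},
        QArrow n Δ α.1 β.1 ↔ QArrow n Δ' (f α).1 (f β).1 := by
  have : NeZero n := ⟨by omega⟩
  rcases h with ⟨k, rfl⟩ | rfl
  · exact exists_equiv_qArrow_iff_of_injective (rotEdge_injective k) Δ
      (fun α _ β _ => boundaryArrow_image_rotEdge k Δ α β)
      (fun α _ β _ => punctureArrow_image_rotEdge k Δ α β)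
  by_cases hpair : ∃ p, (p, p, true) ∈ Δ ∧ (p, p, false) ∈ Δ
  · obtain ⟨p, htrue, hfalse⟩ := hpair
    rw [image_invTags_eq_self hΔ.2.1 htrue hfalse]
    exact ⟨Equiv.refl _, fun _ _ => Iff.rfl⟩
  push Not at hpair
  exact exists_equiv_qArrow_iff_of_injective invTags_involutive.injective Δ
    (fun α hα β hβ => boundaryArrow_image_invTags (by omega) hpair hα hβ)
    (fun α _ β _ => punctureArrow_image_invTags Δ α β)

/-- if two triangulations of the punctured `n`-gon (`n ≥ 5`) differ
by a rotation or by inverting all tags, then their associated quivers are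
isomorphic. -/
theorem stmt_15 (n : ℕ) (hn : 5 ≤ n) (Δ Δ' : Finset (TEdge n))
    (hΔ : IsTriangulation n Δ) (hΔ' : IsTriangulation n Δ')
    (h : (∃ k : Fin n, Δ' = Δ.image (rotEdge n k)) ∨ Δ' = Δ.image (invTags n)) :
    ∃ f : {e // e ∈ Δ} ≃ {e // e ∈ Δ'},
      ∀ α β : {e // e ∈ Δ},
        QArrow n Δ α.1 β.1 ↔ QArrow n Δ' (f α).1 (f β).1 :=
  stmt_15_general n hn Δ Δ' hΔ h
end

section
/- Any triangulation of the punctured n-gon other than the 'star' triangulation S_n (all edges joining the puncture to boundary vertices) contains a diagonal α that is close to the border, i.e., a diagonal cutting off a triangle with exactly two boundary edges. -/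
/-! Take a diagonal `M_{a,b}` of `Δ` with shortest boundary arc. If `b ≠ a + 2`, either
`M_{a,a+2}` is in `Δ`, or by maximality some edge of `Δ` crosses it. Such an edge has to
pass through the vertex `a + 1`, which lies inside the arc of `M_{a,b}`; as it does not
cross `M_{a,b}`, it is a diagonal nested inside that arc, hence shorter. -/

lemma ccwPos_eq {n : ℕ} (a x : Fin n) :
    ccwPos n a x = if a.val ≤ x.val then x.val - a.val else x.val + n - a.val := by
  have ha := a.isLt
  have hx := x.isLt
  unfold ccwPos
  split
  · rw [show x.val + n - a.val = (x.val - a.val) + n by omega, Nat.add_mod_right]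
    exact Nat.mod_eq_of_lt (by omega)
  · exact Nat.mod_eq_of_lt (by omega)

lemma ccwPos_self {n : ℕ} (a : Fin n) : ccwPos n a a = 0 := by
  simp [ccwPos_eq]

lemma ccwPos_lt {n : ℕ} (a x : Fin n) : ccwPos n a x < n :=
  Nat.mod_lt _ a.pos

lemma ccwPos_injective {n : ℕ} (a : Fin n) : Function.Injective (ccwPos n a) := by
  intro x y h
  have := a.isLt; have := x.isLt; have := y.isLt
  rw [ccwPos_eq, ccwPos_eq] at h
  ext
  split_ifs at h <;> omega

lemma ccwPos_eq_sub {n : ℕ} (a x y : Fin n) :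
    ccwPos n x y =
      if ccwPos n a x ≤ ccwPos n a y then ccwPos n a y - ccwPos n a x
      else ccwPos n a y + n - ccwPos n a x := by
  have := a.isLt; have := x.isLt; have := y.isLt
  simp only [ccwPos_eq]
  split_ifs <;> omega

lemma exists_ccwPos_eq {n k : ℕ} (a : Fin n) (hk : k < n) : ∃ x : Fin n, ccwPos n a x = k := by
  refine ⟨⟨(a.val + k) % n, Nat.mod_lt _ a.pos⟩, ?_⟩
  have := a.isLt
  rw [ccwPos_eq]
  by_cases h : a.val + k < n
  · simp only [Nat.mod_eq_of_lt h]
    split_ifs <;> omega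
  · simp only [Nat.mod_eq_sub_mod (not_lt.1 h), Nat.mod_eq_of_lt (show a.val + k - n < n by omega)]
    split_ifs <;> omega

lemma InArc.mono {n : ℕ} {a b c x : Fin n} (hx : InArc n a c x)
    (hcb : ccwPos n a c ≤ ccwPos n a b) : InArc n a b x :=
  ⟨hx.1, hx.2.trans_le hcb⟩

lemma cross_iff_inArc {n : ℕ} {a b : Fin n} {t : Bool} {g : TEdge n}
    (hab : a ≠ b) (hg : g.1 = g.2.1) :
    Cross n (a, b, t) g ↔ InArc n a b g.1 := by
  simp only [Cross, if_neg hab, if_pos hg]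

lemma cross_iff {n : ℕ} {a b : Fin n} {t : Bool} {g : TEdge n}
    (hab : a ≠ b) (hg : g.1 ≠ g.2.1) :
    Cross n (a, b, t) g ↔
      (Xor (InArc n a b g.1) (InArc n a b g.2.1) ∨
        (InArc n a b g.1 ∧ InArc n a b g.2.1 ∧
          InArc n g.1 g.2.1 a ∧ InArc n g.1 g.2.1 b)) := by
  simp only [Cross, if_neg hab, if_neg hg]
  rfl

lemma ccwPos_lt_of_inArc_of_inArc {n : ℕ} {a b x y : Fin n} (hxy : x ≠ y)
    (hx : InArc n a b x) (hy : InArc n a b y)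
    (hnest : ¬(InArc n x y a ∧ InArc n x y b)) :
    ccwPos n x y < ccwPos n a b := by
  have hxy' : ccwPos n a x ≠ ccwPos n a y := fun h => hxy (ccwPos_injective a h)
  unfold InArc at hx hy hnest
  have := ccwPos_lt a b
  have exy := ccwPos_eq_sub a x y
  have exa := ccwPos_eq_sub a x a
  have exb := ccwPos_eq_sub a x b
  rw [ccwPos_self] at exa
  -- if `y` came before `x` after `a`, the arc from `x` to `y` would wrap around past `a` and `b`
  split_ifs at exy exa exb <;> omega

lemma ccwPos_lt_of_cross_of_not_cross {n : ℕ} {a b c : Fin n} {t t' : Bool} {g : TEdge n}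
    (hc : ccwPos n a c = 2) (hcb : 2 < ccwPos n a b)
    (hcross : Cross n (a, c, t) g) (hncross : ¬Cross n (a, b, t') g) :
    g.1 ≠ g.2.1 ∧ ccwPos n g.1 g.2.1 < ccwPos n a b := by
  have hac : a ≠ c := by rintro rfl; simp [ccwPos_self] at hc
  have hab : a ≠ b := by rintro rfl; simp [ccwPos_self] at hcb
  have hmono : ∀ {x}, InArc n a c x → InArc n a b x := fun hx => hx.mono (by omega)
  by_cases hg : g.1 = g.2.1
  · rw [cross_iff_inArc hac hg] at hcross
    rw [cross_iff_inArc hab hg] at hncross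
    exact absurd (hmono hcross) hncross
  refine ⟨hg, ?_⟩
  rw [cross_iff hac hg] at hcross
  rw [cross_iff hab hg, not_or] at hncross
  have hone : ∀ {x}, InArc n a c x → ccwPos n a x = 1 := by
    intro x hx; unfold InArc at hx; omega
  have hboth : InArc n a b g.1 ∧ InArc n a b g.2.1 := by
    rcases hcross with (⟨h1, -⟩ | ⟨h2, -⟩) | ⟨h1, h2, -⟩
    · exact ⟨hmono h1, by_contra fun h2 => hncross.1 (Or.inl ⟨hmono h1, h2⟩)⟩
    · exact ⟨by_contra fun h1 => hncross.1 (Or.inr ⟨hmono h2, h1⟩), hmono h2⟩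
    · exact absurd (ccwPos_injective a ((hone h1).trans (hone h2).symm)) hg
  exact ccwPos_lt_of_inArc_of_inArc hg hboth.1 hboth.2
    fun h => hncross.2 ⟨hboth.1, hboth.2, h⟩

lemma IsTriangulation.exists_shorter_diagonal {n : ℕ} {Δ : Finset (TEdge n)}
    (hΔ : IsTriangulation n Δ) {e : TEdge n} (he : e ∈ Δ) (hlen : 2 < ccwPos n e.1 e.2.1) :
    ∃ f ∈ Δ, f.1 ≠ f.2.1 ∧ ccwPos n f.1 f.2.1 < ccwPos n e.1 e.2.1 := by
  obtain ⟨a, b, t⟩ := e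
  obtain ⟨c, hc⟩ := exists_ccwPos_eq a (hlen.trans (ccwPos_lt a b))
  have hac : a ≠ c := by rintro rfl; simp [ccwPos_self] at hc
  by_cases hmem : ((a, c, true) : TEdge n) ∈ Δ
  · exact ⟨(a, c, true), hmem, hac, hc ▸ hlen⟩
  obtain ⟨g, hg, hcross⟩ := hΔ.2.2 (a, c, true) (Or.inr ⟨rfl, hc.ge⟩) hmem
  exact ⟨g, hg, ccwPos_lt_of_cross_of_not_cross hc hlen hcross (hΔ.2.1 _ he g hg)⟩

theorem stmt_16_general (n : ℕ) (Δ : Finset (TEdge n))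
    (hΔ : IsTriangulation n Δ) (hstar : ¬∀ e ∈ Δ, e.1 = e.2.1) :
    ∃ e ∈ Δ, ccwPos n e.1 e.2.1 = 2 := by
  obtain ⟨e₀, he₀, hne₀⟩ := not_forall₂.1 hstar
  obtain ⟨e, hmem, hmin⟩ :=
    (Δ.filter fun e => e.1 ≠ e.2.1).exists_min_image (fun e => ccwPos n e.1 e.2.1)
      ⟨e₀, Finset.mem_filter.2 ⟨he₀, hne₀⟩⟩
  obtain ⟨he, hne⟩ := Finset.mem_filter.1 hmem
  have h2 : 2 ≤ ccwPos n e.1 e.2.1 := ((hΔ.1 e he).resolve_left hne).2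
  refine ⟨e, he, h2.antisymm' (not_lt.1 fun hlt => ?_)⟩
  obtain ⟨f, hf, hnef, hlt'⟩ := hΔ.exists_shorter_diagonal he hlt
  exact (hmin f (Finset.mem_filter.2 ⟨hf, hnef⟩)).not_gt hlt'

/-- any triangulation of the punctured `n`-gon other than the star
triangulation `S_n` (all of whose edges join the puncture to boundary vertices)
contains a diagonal close to the border, i.e. an edge `M_{a,b}` with
`|δ_{a,b}| = 3` (so `b = a + 2`), cutting off a triangle with exactly two
boundary edges. -/
theorem stmt_16 (n : ℕ) (hn : 5 ≤ n) (Δ : Finset (TEdge n))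
    (hΔ : IsTriangulation n Δ) (hstar : ¬∀ e ∈ Δ, e.1 = e.2.1) :
    ∃ e ∈ Δ, ccwPos n e.1 e.2.1 = 2 :=
  stmt_16_general n Δ hΔ hstar
end

section
/- The mutation class of the quiver D_4 contains exactly 6 quivers up to isomorphism. -/
/-- Fomin–Zelevinsky matrix mutation of a skew-symmetric integer matrix
(encoding a quiver with no loops and no 2-cycles) at the vertex `k`. -/
def mutate {m : ℕ} (B : Matrix (Fin m) (Fin m) ℤ) (k : Fin m) :
    Matrix (Fin m) (Fin m) ℤ :=
  fun i j =>
    if i = k ∨ j = k then -B i j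
    else B i j + (|B i k| * B k j + B i k * |B k j|) / 2

/-- Two quivers are mutation equivalent if one is obtained from the other by a
finite sequence of mutations. -/
def MutationEquiv {m : ℕ} (B B' : Matrix (Fin m) (Fin m) ℤ) : Prop :=
  Relation.ReflTransGen (fun C C' => ∃ k, C' = mutate C k) B B'

/-- Isomorphism of quivers: simultaneous permutation of rows and columns of the
encoding matrices. -/
def QuiverIso {m : ℕ} (B B' : Matrix (Fin m) (Fin m) ℤ) : Prop :=
  ∃ σ : Equiv.Perm (Fin m), ∀ i j, B' (σ i) (σ j) = B i j

/-- The quiver `D_4`: three vertices, each with an arrow to a central vertex. -/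
def BD4 : Matrix (Fin 4) (Fin 4) ℤ :=
  fun i j =>
    if i ≠ 0 ∧ j = 0 then 1 else if i = 0 ∧ j ≠ 0 then -1 else 0

/-!
The quivers reachable from `D_4` by at most five mutations already form a set of 50 labelled
quivers that is closed under mutation, so this set is the whole mutation class. Each of its
members is isomorphic to one of six explicit quivers, and these six are pairwise non-isomorphic;
both are finite checks over the 24 permutations of the vertices.
-/

theorem Nat.card_quot_eq_of_representatives {α : Type*} {r : α → α → Prop} (hr : Equivalence r)
    {n : ℕ} (rep : Fin n → α) (hrep : ∀ a, ∃ c, r (rep c) a)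
    (hdistinct : ∀ c d, r (rep c) (rep d) → c = d) : Nat.card (Quot r) = n := by
  have hbij : Function.Bijective fun c => Quot.mk r (rep c) := by
    refine ⟨fun c d h => hdistinct c d (hr.eqvGen_iff.mp (Quot.eqvGen_exact h)), ?_⟩
    refine Quot.ind fun a => ?_
    obtain ⟨c, hc⟩ := hrep a
    exact ⟨c, Quot.sound hc⟩
  simpa using (Nat.card_eq_of_bijective _ hbij).symm

section Quivers

variable {m : ℕ}

theorem quiverIso_equivalence : Equivalence (@QuiverIso m) where
  refl _ := ⟨Equiv.refl _, fun _ _ => rfl⟩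
  symm := fun ⟨σ, hσ⟩ => ⟨σ.symm, fun i j => by simpa using (hσ (σ.symm i) (σ.symm j)).symm⟩
  trans := fun ⟨σ, hσ⟩ ⟨τ, hτ⟩ => ⟨σ.trans τ, fun i j => (hτ (σ i) (σ j)).trans (hσ i j)⟩

theorem quiverIso_iff_exists_submatrix_eq {B B' : Matrix (Fin m) (Fin m) ℤ} :
    QuiverIso B B' ↔ ∃ σ : Equiv.Perm (Fin m), B'.submatrix σ σ = B := by
  simp only [QuiverIso, ← Matrix.ext_iff, Matrix.submatrix_apply]

instance : DecidableRel (@QuiverIso m) := fun _ _ =>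
  decidable_of_iff' _ quiverIso_iff_exists_submatrix_eq

theorem MutationEquiv.mem_of_mutate_mem {B₀ B : Matrix (Fin m) (Fin m) ℤ}
    {S : Set (Matrix (Fin m) (Fin m) ℤ)} (h₀ : B₀ ∈ S) (hS : ∀ C ∈ S, ∀ k, mutate C k ∈ S)
    (h : MutationEquiv B₀ B) : B ∈ S := by
  induction h with
  | refl => exact h₀
  | tail _ hstep ih => obtain ⟨k, rfl⟩ := hstep; exact hS _ ih k

def mutationBall (B₀ : Matrix (Fin m) (Fin m) ℤ) : ℕ → List (Matrix (Fin m) (Fin m) ℤ)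
  | 0 => [B₀]
  | n + 1 =>
    let L := mutationBall B₀ n
    (L ++ L.flatMap fun B => List.ofFn (mutate B)).dedup

theorem mutationEquiv_of_mem_mutationBall {B₀ B : Matrix (Fin m) (Fin m) ℤ} {n : ℕ}
    (h : B ∈ mutationBall B₀ n) : MutationEquiv B₀ B := by
  induction n generalizing B with
  | zero => simp only [mutationBall, List.mem_singleton] at h; exact h ▸ .refl
  | succ n ih =>
    simp only [mutationBall, List.mem_dedup, List.mem_append, List.mem_flatMap, List.mem_ofFn]
      at h
    obtain h | ⟨C, hC, k, rfl⟩ := h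
    · exact ih h
    · exact (ih hC).tail ⟨k, rfl⟩

end Quivers

theorem mutationEquiv_BD4_iff {B : Matrix (Fin 4) (Fin 4) ℤ} :
    MutationEquiv BD4 B ↔ B ∈ mutationBall BD4 5 := by
  refine ⟨fun h => h.mem_of_mutate_mem (S := {C | C ∈ mutationBall BD4 5}) ?_ ?_,
    mutationEquiv_of_mem_mutationBall⟩
  · simp only [Set.mem_ofPred_eq]; decide +kernel
  · simp only [Set.mem_ofPred_eq]; decide +kernel

/-- An entry `1` at `(i, j)` is an arrow `i → j`. In order: the four orientations of `D_4` up to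
isomorphism, two oriented triangles glued along an edge, and the oriented `4`-cycle. -/
def d4MutationClassRep : Fin 6 → Matrix (Fin 4) (Fin 4) ℤ :=
  ![!![0, -1, -1, -1; 1, 0, 0, 0; 1, 0, 0, 0; 1, 0, 0, 0],
    !![0, 1, 1, 1; -1, 0, 0, 0; -1, 0, 0, 0; -1, 0, 0, 0],
    !![0, 1, -1, -1; -1, 0, 0, 0; 1, 0, 0, 0; 1, 0, 0, 0],
    !![0, -1, 1, 1; 1, 0, 0, 0; -1, 0, 0, 0; -1, 0, 0, 0],
    !![0, -1, 1, 1; 1, 0, -1, -1; -1, 1, 0, 0; -1, 1, 0, 0],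
    !![0, 0, -1, 1; 0, 0, 1, -1; 1, -1, 0, 0; -1, 1, 0, 0]]

theorem exists_quiverIso_d4MutationClassRep :
    ∀ B ∈ mutationBall BD4 5, ∃ c, QuiverIso (d4MutationClassRep c) B := by
  decide +kernel

theorem d4MutationClassRep_eq_of_quiverIso :
    ∀ c d, QuiverIso (d4MutationClassRep c) (d4MutationClassRep d) → c = d := by
  decide +kernel

theorem d4MutationClassRep_mem_mutationBall : ∀ c, d4MutationClassRep c ∈ mutationBall BD4 5 := by
  decide +kernel

/-- the mutation class of the quiver `D_4` contains exactly 6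
quivers up to isomorphism. -/
theorem stmt_19 :
    Nat.card
        (Quot fun (B B' : {B : Matrix (Fin 4) (Fin 4) ℤ // MutationEquiv BD4 B}) =>
          QuiverIso B.1 B'.1) = 6 :=
  Nat.card_quot_eq_of_representatives (quiverIso_equivalence.comap Subtype.val)
    (fun c => ⟨d4MutationClassRep c,
      mutationEquiv_BD4_iff.mpr (d4MutationClassRep_mem_mutationBall c)⟩)
    (fun B => exists_quiverIso_d4MutationClassRep B.1 (mutationEquiv_BD4_iff.mp B.2))
    d4MutationClassRep_eq_of_quiverIso
end
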